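/- Let A_1, A_2 be Hermitian matrices on a d-dimensional complex inner product space with A_1 ⪰ I and A_2 ⪰ I, let t ∈ (0,1), and set Q_k := (A_k − I)/2. Then det[h_{t,−}(A_1)] · det[f_t(A_1) + f_{1−t}(A_2)] · det[h_{1−t,−}(A_2)] = 2^d · det[(A_1+I)^t (A_2+I)^{1−t} − (A_1−I)^t (A_2−I)^{1−t}] = 4^d · det[(Q_1+I)^t (Q_2+I)^{1−t} − Q_1^t Q_2^{1−t}], where powers of the positive semidefinite matrices A_k ± I, Q_k, Q_k + I are taken by the continuous functional calculus (with 0^t := 0 for t > 0). -/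

import Mathlib

/-! Write `P = (A + I)^t` and `M = (A - I)^t`. Since `h_{t,-}(A)`, `f_t(A)`, `P`, `M` are all
functions of the same matrix `A`, the functional calculus gives `h_{t,-}(A) = P - M` and
`h_{t,-}(A) f_t(A) = f_t(A) h_{t,-}(A) = P + M`, the latter because `h_{t,-} > 0` on the spectrum.
Hence `h₁ (f₁ + f₂) h₂ = (P₁ + M₁)(P₂ - M₂) + (P₁ - M₁)(P₂ + M₂) = 2 (P₁ P₂ - M₁ M₂)`, and the
first identity follows from multiplicativity of `det`. For the second, `Q + I = (A + I)/2` and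
`Q = (A - I)/2`, so every product of powers picks up the factor `2^{-t} 2^{-(1-t)} = 1/2`. -/

open Matrix
open scoped ComplexOrder

noncomputable section

variable {n : Type*} [Fintype n] [DecidableEq n]

/-- Real power `A^t` of a (positive semidefinite Hermitian) matrix via the continuous
functional calculus, with the convention `0^t = 0` for `t > 0`. -/
def mpow (A : Matrix n n ℂ) (t : ℝ) : Matrix n n ℂ := cfc (fun x : ℝ => x ^ t) A

/-- `h_{t,−}(A) = (A+I)^t − (A−I)^t` via the continuous functional calculus. -/
def hMinusMat (t : ℝ) (A : Matrix n n ℂ) : Matrix n n ℂ :=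
  cfc (fun s : ℝ => (s + 1) ^ t - (s - 1) ^ t) A

/-- `f_t(A)` via the continuous functional calculus, where
`f_t(s) = ((s+1)^t + (s−1)^t)/((s+1)^t − (s−1)^t)`. -/
def fPowMat (t : ℝ) (A : Matrix n n ℂ) : Matrix n n ℂ :=
  cfc (fun s : ℝ => ((s + 1) ^ t + (s - 1) ^ t) / ((s + 1) ^ t - (s - 1) ^ t)) A

lemma mul_add_mul_eq_two_mul_sub {R : Type*} [Ring R] {h₁ f₁ f₂ h₂ p₁ m₁ p₂ m₂ : R}
    (hh₁ : h₁ = p₁ - m₁) (hf₁ : h₁ * f₁ = p₁ + m₁) (hf₂ : f₂ * h₂ = p₂ + m₂)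
    (hh₂ : h₂ = p₂ - m₂) :
    h₁ * (f₁ + f₂) * h₂ = 2 * (p₁ * p₂ - m₁ * m₂) := by
  rw [mul_add, add_mul, hf₁, mul_assoc, hf₂, hh₁, hh₂]
  noncomm_ring

lemma inv_two_smul_sub_one_add_one {K R : Type*} [Field K] [CharZero K] [Ring R] [Algebra K R]
    (a : R) : (2 : K)⁻¹ • (a - 1) + 1 = (2 : K)⁻¹ • (a + 1) := by
  module

section

variable {A B : Matrix n n ℂ} {t : ℝ}

lemma continuousOn_spectrum_real (A : Matrix n n ℂ) (f : ℝ → ℝ) :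
    ContinuousOn f (spectrum ℝ A) :=
  Matrix.finite_real_spectrum.continuousOn f

lemma continuousOn_image_spectrum_real (A : Matrix n n ℂ) (g f : ℝ → ℝ) :
    ContinuousOn f (g '' spectrum ℝ A) :=
  (Matrix.finite_real_spectrum.image g).continuousOn f

omit [Fintype n] in
lemma isHermitian_of_posSemidef_sub_one (hA : (A - 1).PosSemidef) : A.IsHermitian := by
  simpa using hA.isHermitian.add isHermitian_one

open scoped MatrixOrder in
lemma one_le_of_mem_spectrum (hA : (A - 1).PosSemidef) {x : ℝ} (hx : x ∈ spectrum ℝ A) :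
    1 ≤ x :=
  (CFC.one_le_iff A (isHermitian_of_posSemidef_sub_one hA).isSelfAdjoint).1 hA x hx

omit [Fintype n] in
lemma posSemidef_add_one (hA : (A - 1).PosSemidef) : (A + 1).PosSemidef := by
  convert hA.add (PosSemidef.one.add PosSemidef.one) using 1
  abel

lemma mpow_cfc (hA : A.IsHermitian) (f : ℝ → ℝ) (t : ℝ) :
    mpow (cfc f A) t = cfc (fun s => f s ^ t) A :=
  (cfc_comp' (fun x : ℝ => x ^ t) f A (continuousOn_image_spectrum_real A _ _)
    (continuousOn_spectrum_real A _) hA.isSelfAdjoint).symm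

lemma mpow_add_one_eq_cfc (hA : A.IsHermitian) (t : ℝ) :
    mpow (A + 1) t = cfc (fun s : ℝ => (s + 1) ^ t) A := by
  rw [← mpow_cfc hA, cfc_add_const _ _ A (continuousOn_spectrum_real A _) hA.isSelfAdjoint,
    cfc_id' ℝ A hA.isSelfAdjoint, map_one]

lemma mpow_sub_one_eq_cfc (hA : A.IsHermitian) (t : ℝ) :
    mpow (A - 1) t = cfc (fun s : ℝ => (s - 1) ^ t) A := by
  rw [← mpow_cfc hA, cfc_sub _ _ A (continuousOn_spectrum_real A _)
    (continuousOn_spectrum_real A _), cfc_id' ℝ A hA.isSelfAdjoint,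
    cfc_const_one ℝ A hA.isSelfAdjoint]

lemma hMinusMat_eq_mpow_sub_mpow (hA : A.IsHermitian) (t : ℝ) :
    hMinusMat t A = mpow (A + 1) t - mpow (A - 1) t := by
  rw [mpow_add_one_eq_cfc hA, mpow_sub_one_eq_cfc hA, hMinusMat]
  exact cfc_sub _ _ A (continuousOn_spectrum_real A _) (continuousOn_spectrum_real A _)

lemma hMinusMat_mul_fPowMat (hA : (A - 1).PosSemidef) (ht : 0 < t) :
    hMinusMat t A * fPowMat t A = mpow (A + 1) t + mpow (A - 1) t := by
  have hH := isHermitian_of_posSemidef_sub_one hA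
  rw [mpow_add_one_eq_cfc hH, mpow_sub_one_eq_cfc hH, hMinusMat, fPowMat,
    ← cfc_mul _ _ A (continuousOn_spectrum_real A _) (continuousOn_spectrum_real A _),
    ← cfc_add A _ _ (continuousOn_spectrum_real A _) (continuousOn_spectrum_real A _)]
  refine cfc_congr fun s hs => mul_div_cancel₀ _ (sub_pos.2 ?_).ne'
  have hs₁ : 1 ≤ s := one_le_of_mem_spectrum hA hs
  exact Real.rpow_lt_rpow (by linarith) (by linarith) ht

lemma fPowMat_mul_hMinusMat (hA : (A - 1).PosSemidef) (ht : 0 < t) :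
    fPowMat t A * hMinusMat t A = mpow (A + 1) t + mpow (A - 1) t :=
  (cfc_commute_cfc _ _ A).eq.symm.trans (hMinusMat_mul_fPowMat hA ht)

open scoped MatrixOrder in
lemma mpow_smul (hB : B.PosSemidef) {c : ℝ} (hc : 0 ≤ c) (t : ℝ) :
    mpow ((c : ℂ) • B) t = ((c ^ t : ℝ) : ℂ) • mpow B t := by
  simp only [Complex.coe_smul]
  calc mpow (c • B) t = cfc (fun x : ℝ => (c • x) ^ t) B :=
        (cfc_comp_smul c (fun x : ℝ => x ^ t) B (continuousOn_image_spectrum_real B _ _)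
          hB.isHermitian.isSelfAdjoint).symm
    _ = cfc (fun x : ℝ => c ^ t * x ^ t) B :=
        cfc_congr fun x hx => Real.mul_rpow hc (spectrum_nonneg_of_nonneg hB.nonneg hx)
    _ = c ^ t • mpow B t := cfc_const_mul _ _ B (continuousOn_spectrum_real B _)

end

/-- For Hermitian `A₁, A₂ ⪰ I`, `t ∈ (0,1)` and `Q_k = (A_k − I)/2`:
`det[h_{t,−}(A₁)] det[f_t(A₁) + f_{1−t}(A₂)] det[h_{1−t,−}(A₂)]
 = 2^d det[(A₁+I)^t (A₂+I)^{1−t} − (A₁−I)^t (A₂−I)^{1−t}]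
 = 4^d det[(Q₁+I)^t (Q₂+I)^{1−t} − Q₁^t Q₂^{1−t}]`. -/
theorem gaussian_overlap_determinant_identity
    (A₁ A₂ : Matrix n n ℂ)
    (hA₁ : (A₁ - 1).PosSemidef) (hA₂ : (A₂ - 1).PosSemidef)
    (t : ℝ) (ht : t ∈ Set.Ioo (0 : ℝ) 1) :
    (hMinusMat t A₁).det * (fPowMat t A₁ + fPowMat (1 - t) A₂).det *
        (hMinusMat (1 - t) A₂).det =
      (2 : ℂ) ^ Fintype.card n *
        (mpow (A₁ + 1) t * mpow (A₂ + 1) (1 - t) -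
          mpow (A₁ - 1) t * mpow (A₂ - 1) (1 - t)).det ∧
    (2 : ℂ) ^ Fintype.card n *
        (mpow (A₁ + 1) t * mpow (A₂ + 1) (1 - t) -
          mpow (A₁ - 1) t * mpow (A₂ - 1) (1 - t)).det =
      (4 : ℂ) ^ Fintype.card n *
        (mpow ((2 : ℂ)⁻¹ • (A₁ - 1) + 1) t * mpow ((2 : ℂ)⁻¹ • (A₂ - 1) + 1) (1 - t) -
          mpow ((2 : ℂ)⁻¹ • (A₁ - 1)) t * mpow ((2 : ℂ)⁻¹ • (A₂ - 1)) (1 - t)).det := by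
  obtain ⟨ht₀, ht₁⟩ := ht
  have ht₁' : 0 < 1 - t := sub_pos.2 ht₁
  constructor
  · rw [← det_mul, ← det_mul, mul_add_mul_eq_two_mul_sub
      (hMinusMat_eq_mpow_sub_mpow (isHermitian_of_posSemidef_sub_one hA₁) t)
      (hMinusMat_mul_fPowMat hA₁ ht₀) (fPowMat_mul_hMinusMat hA₂ ht₁')
      (hMinusMat_eq_mpow_sub_mpow (isHermitian_of_posSemidef_sub_one hA₂) (1 - t)),
      two_mul, ← two_smul ℂ, det_smul]
  · have h_half : (2 : ℂ)⁻¹ = ((2⁻¹ : ℝ) : ℂ) := by push_cast; rfl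
    have h_rpow : (2⁻¹ : ℝ) ^ t * (2⁻¹ : ℝ) ^ (1 - t) = 2⁻¹ := by
      rw [← Real.rpow_add (by norm_num), add_sub_cancel, Real.rpow_one]
    rw [inv_two_smul_sub_one_add_one, inv_two_smul_sub_one_add_one, h_half,
      mpow_smul (posSemidef_add_one hA₁) (by norm_num),
      mpow_smul (posSemidef_add_one hA₂) (by norm_num), mpow_smul hA₁ (by norm_num),
      mpow_smul hA₂ (by norm_num), smul_mul_smul_comm, smul_mul_smul_comm, ← smul_sub,
      ← Complex.ofReal_mul, h_rpow, det_smul, ← mul_assoc, ← mul_pow]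
    norm_num

end
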